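/- Let H₁ ⊆ H₂ be finite Heisenberg p-groups with common center Z (so each Hᵢ is a p-group with center Z, Hᵢ/Z elementary abelian, and commutator pairing inducing a nondegenerate alternating form on Hᵢ/Z). Let φ be a nontrivial character of Z, and let η₁, η₂ be irreducible complex representations of H₁, H₂ respectively, both with central character φ. Then the restriction of η₂ to H₁ is isomorphic to the direct sum of [H₂:H₁]^{1/2} copies of η₁. -/

import Mathlib

/-!
Suppose `χ` is a character of a subgroup `Z` of a finite group `G` such that every `g ∉ Z` has a
commutator `c = ⁅y, g⁆ ∈ Z` with `χ c ≠ 1`. If `Z` acts through `χ` on a representation, then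
conjugation by `y` multiplies its character at `g` by `χ c`, so characters vanish off `Z` and
`dim Hom_G(η, σ) · |G| = |Z| · dim η · dim σ`. For irreducible `η` this gives `|G| = |Z| (dim η)²`
and `dim Hom_G(η, σ) = dim σ / dim η`. A basis of `Hom_G(η, σ)` yields a map `ηⁿ → σ` which is
onto, since a complement of its image would receive a nonzero map from `η`; counting dimensions,
it is an isomorphism. For `H₁ ⊆ H₂` with common center, `n = dim η₂ / dim η₁` and
`n² = |Z| (dim η₂)² / (|Z| (dim η₁)²) = [H₂ : H₁]`.
-/

/-- A representation is irreducible: nonzero, and every invariant submodule is `⊥` or `⊤`. -/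
def IrreducibleRep {H : Type*} [Group H] {V : Type*} [AddCommGroup V] [Module ℂ V]
    (ρ : Representation ℂ H V) : Prop :=
  (⊥ : Submodule ℂ V) ≠ ⊤ ∧
    ∀ p : Submodule ℂ V, (∀ h : H, ∀ v ∈ p, ρ h v ∈ p) → p = ⊥ ∨ p = ⊤

open scoped commutatorElement

open Module

theorem IrreducibleRep.isIrreducible {G V : Type*} [Group G] [AddCommGroup V] [Module ℂ V]
    {ρ : Representation ℂ G V} (h : IrreducibleRep ρ) : ρ.IsIrreducible where
  exists_pair_ne := ⟨⊥, ⊤, fun hbot => h.1 congr(Subrepresentation.toSubmodule $hbot)⟩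
  eq_bot_or_eq_top C := (h.2 C.toSubmodule C.apply_mem_toSubmodule).imp
    (fun hC => Subrepresentation.toSubmodule_injective hC)
    (fun hC => Subrepresentation.toSubmodule_injective hC)

namespace Representation

variable {k G V W : Type*} [Field k] [Group G] [AddCommGroup V] [Module k V]
  [AddCommGroup W] [Module k W]

def HasCentralCharacter (ρ : Representation k G V) (Z : Subgroup G) (χ : Z →* kˣ) : Prop :=
  ∀ (z : Z) (v : V), ρ z v = (χ z : k) • v

theorem IsIrreducible.nontrivial (ρ : Representation k G V) [ρ.IsIrreducible] : Nontrivial V := by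
  by_contra hV
  rw [not_nontrivial_iff_subsingleton] at hV
  exact bot_ne_top (α := Subrepresentation ρ)
    (Subrepresentation.toSubmodule_injective (Subsingleton.elim _ _))

theorem character_eq_zero_of_conj_eq_smul (ρ : Representation k G V) {g y c : G} {a : k}
    (hconj : y * g * y⁻¹ = c * g) (hc : ρ c = a • 1) (ha : a ≠ 1) : ρ.character g = 0 := by
  have h : ρ.character g = a * ρ.character g := calc
    ρ.character g = ρ.character (c * g) := by rw [← hconj, char_conj]
    _ = a * ρ.character g := by
      simp only [character, map_mul, hc, smul_mul_assoc, one_mul, map_smul, smul_eq_mul]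
  have : (1 - a) * ρ.character g = 0 := by rw [sub_mul, one_mul, ← h, sub_self]
  exact (mul_eq_zero.mp this).resolve_left (sub_ne_zero.mpr ha.symm)

theorem IntertwiningMap.lsum_apply_map {ρ : Representation k G V} {σ : Representation k G W}
    {ι : Type*} [Fintype ι] [DecidableEq ι] (f : ι → IntertwiningMap ρ σ) (g : G) (v : ι → V) :
    LinearMap.lsum k (fun _ => V) k (fun i => (f i).toLinearMap) (fun i => ρ g (v i)) =
      σ g (LinearMap.lsum k (fun _ => V) k (fun i => (f i).toLinearMap) v) := by
  simp only [LinearMap.lsum_apply, LinearMap.sum_apply, LinearMap.comp_apply, LinearMap.proj_apply,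
    map_sum, IntertwiningMap.toLinearMap_apply, IntertwiningMap.isIntertwining]

end Representation

namespace MonoidHom

variable {G k : Type*} [Group G] [Field k] {Z : Subgroup G} (χ : Z →* kˣ)

def IsNondegenerateOnCommutators : Prop :=
  ∀ g ∉ Z, ∃ (y : G) (z : Z), ⁅y, g⁆ = z ∧ χ z ≠ 1

theorem exists_commutator_eq_and_ne_one {g y : G} (h : ⁅g, y⁆ ∈ Z) (hχ : χ ⟨⁅g, y⁆, h⟩ ≠ 1) :
    ∃ z : Z, ⁅y, g⁆ = z ∧ χ z ≠ 1 :=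
  ⟨⟨⁅g, y⁆, h⟩⁻¹, by simp [commutatorElement_inv], by simpa using hχ⟩

theorem isNondegenerateOnCommutators_of_pairing (hcomm : ∀ x y : G, ⁅x, y⁆ ∈ Z)
    (hnd : ∀ x : G, (∀ y : G, χ ⟨⁅x, y⁆, hcomm x y⟩ = 1) → x ∈ Z) :
    χ.IsNondegenerateOnCommutators := fun g hg => by
  obtain ⟨y, hy⟩ : ∃ y, χ ⟨⁅g, y⁆, hcomm g y⟩ ≠ 1 := by simpa using mt (hnd g) hg
  exact ⟨y, χ.exists_commutator_eq_and_ne_one _ hy⟩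

theorem isNondegenerateOnCommutators_comp_subgroupOfEquivOfLe {K : Subgroup G} (hZK : Z ≤ K)
    (hcomm : ∀ x y : G, ⁅x, y⁆ ∈ Z)
    (hnd : ∀ x ∈ K, (∀ y ∈ K, χ ⟨⁅x, y⁆, hcomm x y⟩ = 1) → x ∈ Z) :
    (χ.comp (Subgroup.subgroupOfEquivOfLe hZK).toMonoidHom).IsNondegenerateOnCommutators := by
  intro g hg
  have hgZ : (g : G) ∉ Z := by simpa [Subgroup.mem_subgroupOf] using hg
  obtain ⟨y, hy, hχy⟩ : ∃ y ∈ K, χ ⟨⁅(g : G), y⁆, hcomm g y⟩ ≠ 1 := by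
    simpa using mt (hnd g g.2) hgZ
  obtain ⟨z, hyz, hz⟩ := χ.exists_commutator_eq_and_ne_one _ hχy
  exact ⟨⟨y, hy⟩, (Subgroup.subgroupOfEquivOfLe hZK).symm z,
    Subtype.ext (by simpa [commutatorElement_def] using hyz), by simpa using hz⟩

end MonoidHom

namespace Representation.HasCentralCharacter

variable {k G V W : Type*} [Field k] [Group G] [AddCommGroup V] [Module k V]
  [AddCommGroup W] [Module k W] {Z : Subgroup G} {χ : Z →* kˣ}
  {ρ : Representation k G V} {σ : Representation k G W}

theorem eq_smul_one (hρ : ρ.HasCentralCharacter Z χ) (z : Z) : ρ z = (χ z : k) • 1 :=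
  LinearMap.ext (hρ z)

theorem subrepresentation (hσ : σ.HasCentralCharacter Z χ) (C : Subrepresentation σ) :
    C.toRepresentation.HasCentralCharacter Z χ :=
  fun z v => Subtype.ext (hσ z v)

theorem character_coe [FiniteDimensional k V] (hρ : ρ.HasCentralCharacter Z χ) (z : Z) :
    ρ.character z = χ z * finrank k V := by
  rw [character, hρ.eq_smul_one, map_smul, LinearMap.trace_one, smul_eq_mul]

theorem character_eq_zero (hρ : ρ.HasCentralCharacter Z χ) (hχ : χ.IsNondegenerateOnCommutators)
    {g : G} (hg : g ∉ Z) : ρ.character g = 0 := by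
  obtain ⟨y, z, hyz, hz⟩ := hχ g hg
  refine ρ.character_eq_zero_of_conj_eq_smul (y := y) (c := z) ?_ (hρ.eq_smul_one z)
    (Units.val_eq_one.not.mpr hz)
  rw [← hyz, commutatorElement_def]
  group

variable [Fintype G] [FiniteDimensional k V] [FiniteDimensional k W]

theorem sum_character_mul_character_inv (hρ : ρ.HasCentralCharacter Z χ)
    (hσ : σ.HasCentralCharacter Z χ) (hχ : χ.IsNondegenerateOnCommutators) :
    ∑ g, σ.character g * ρ.character g⁻¹ = Nat.card Z * (finrank k W * finrank k V) := by
  classical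
  have hout : ∑ g : {g // g ∉ Z}, σ.character g * ρ.character (g : G)⁻¹ = 0 :=
    Fintype.sum_eq_zero _ fun g => by rw [hσ.character_eq_zero hχ g.2, zero_mul]
  rw [← Fintype.sum_subtype_add_sum_subtype (· ∈ Z), hout, add_zero]
  have hterm : ∀ z : Z, σ.character z * ρ.character (z : G)⁻¹ = finrank k W * finrank k V := by
    intro z
    rw [← Subgroup.coe_inv, hσ.character_coe, hρ.character_coe, mul_mul_mul_comm, ← Units.val_mul,
      ← map_mul, mul_inv_cancel, map_one, Units.val_one, one_mul]
  rw [Fintype.sum_congr _ _ hterm, Finset.sum_const, Finset.card_univ, nsmul_eq_mul,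
    Nat.card_eq_fintype_card]

variable [CharZero k]

theorem finrank_intertwiningMap_mul_card (hρ : ρ.HasCentralCharacter Z χ)
    (hσ : σ.HasCentralCharacter Z χ) (hχ : χ.IsNondegenerateOnCommutators) :
    finrank k (IntertwiningMap ρ σ) * Nat.card G = Nat.card Z * (finrank k V * finrank k W) := by
  have : Invertible (Nat.card G : k) :=
    invertibleOfNonzero (Nat.cast_ne_zero.mpr Nat.card_pos.ne')
  have h := card_inv_mul_sum_char_mul_char_eq_finrank ρ σ
  rw [sum_character_mul_character_inv hρ hσ hχ] at h
  apply Nat.cast_injective (R := k)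
  push_cast
  rw [← h]
  field_simp

theorem nontrivial_intertwiningMap [Nontrivial V] [Nontrivial W] (hρ : ρ.HasCentralCharacter Z χ)
    (hσ : σ.HasCentralCharacter Z χ) (hχ : χ.IsNondegenerateOnCommutators) :
    Nontrivial (IntertwiningMap ρ σ) := by
  refine Module.nontrivial_of_finrank_pos (R := k) (Nat.pos_of_mul_pos_right (b := Nat.card G) ?_)
  rw [finrank_intertwiningMap_mul_card hρ hσ hχ]
  exact Nat.mul_pos Nat.card_pos (Nat.mul_pos finrank_pos finrank_pos)

theorem surjective_lsum_basis [Nontrivial V] (hρ : ρ.HasCentralCharacter Z χ)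
    (hσ : σ.HasCentralCharacter Z χ) (hχ : χ.IsNondegenerateOnCommutators)
    {ι : Type*} [Fintype ι] [DecidableEq ι] (b : Basis ι k (IntertwiningMap ρ σ)) :
    Function.Surjective (LinearMap.lsum k (fun _ : ι => V) k fun i => (b i).toLinearMap) := by
  set Φ := LinearMap.lsum k (fun _ : ι => V) k fun i => (b i).toLinearMap
  have hΦ : ∀ v, Φ v = ∑ i, b i (v i) := by simp [Φ, LinearMap.lsum_apply]
  let R : Subrepresentation σ := ⟨LinearMap.range Φ, by
    rintro g _ ⟨v, rfl⟩
    exact ⟨_, IntertwiningMap.lsum_apply_map _ g v⟩⟩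
  obtain ⟨C, hRC⟩ := exists_isCompl R
  suffices hC : C = ⊥ by
    rw [← LinearMap.range_eq_top]
    exact congrArg Subrepresentation.toSubmodule (eq_top_of_isCompl_bot (hC ▸ hRC))
  by_contra hC
  have : Nontrivial C.toSubmodule :=
    Submodule.nontrivial_iff_ne_bot.mpr fun h => hC (Subrepresentation.toSubmodule_injective h)
  have := nontrivial_intertwiningMap hρ (hσ.subrepresentation C) hχ
  obtain ⟨f, hf⟩ := exists_ne (0 : IntertwiningMap ρ C.toRepresentation)
  let F : IntertwiningMap ρ σ :=
    (C.toSubmodule.subtype ∘ₗ f.toLinearMap).intertwiningMap_of_isIntertwiningMap ρ σ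
      fun g v => congrArg Subtype.val (f.isIntertwining _ _ g v)
  have hFR : ∀ v, (f v : W) ∈ R := fun v => ⟨fun i => b.repr F i • v, calc
    Φ (fun i => b.repr F i • v) = ∑ i, b.repr F i • b i v := by simp only [hΦ, map_smul]
    _ = (∑ i, b.repr F i • b i) v := by
      simp only [IntertwiningMap.sum_apply, IntertwiningMap.smul_apply]
    _ = f v := by rw [b.sum_repr]; rfl⟩
  apply hf
  ext v
  have hmem : (f v : W) ∈ R ⊓ C := ⟨hFR v, (f v).2⟩
  rw [hRC.inf_eq_bot] at hmem
  exact hmem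

variable [IsAlgClosed k]

theorem card_eq_card_mul_finrank_sq [ρ.IsIrreducible] (hρ : ρ.HasCentralCharacter Z χ)
    (hχ : χ.IsNondegenerateOnCommutators) : Nat.card G = Nat.card Z * finrank k V ^ 2 := by
  have h := finrank_intertwiningMap_mul_card hρ hρ hχ
  rwa [IsIrreducible.finrank_intertwiningMap_self, one_mul, ← sq] at h

theorem finrank_intertwiningMap_mul_finrank [ρ.IsIrreducible] (hρ : ρ.HasCentralCharacter Z χ)
    (hσ : σ.HasCentralCharacter Z χ) (hχ : χ.IsNondegenerateOnCommutators) :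
    finrank k (IntertwiningMap ρ σ) * finrank k V = finrank k W := by
  have := IsIrreducible.nontrivial ρ
  have hpos : 0 < Nat.card Z * finrank k V := Nat.mul_pos Nat.card_pos finrank_pos
  refine Nat.eq_of_mul_eq_mul_left hpos ?_
  calc Nat.card Z * finrank k V * (finrank k (IntertwiningMap ρ σ) * finrank k V)
      = finrank k (IntertwiningMap ρ σ) * (Nat.card Z * finrank k V ^ 2) := by ring
    _ = Nat.card Z * finrank k V * finrank k W := by
      rw [← card_eq_card_mul_finrank_sq hρ hχ, finrank_intertwiningMap_mul_card hρ hσ hχ, mul_assoc]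

theorem exists_linearEquiv_pi [ρ.IsIrreducible] (hρ : ρ.HasCentralCharacter Z χ)
    (hσ : σ.HasCentralCharacter Z χ) (hχ : χ.IsNondegenerateOnCommutators) :
    ∃ e : W ≃ₗ[k] (Fin (finrank k (IntertwiningMap ρ σ)) → V),
      ∀ g w i, e (σ g w) i = ρ g (e w i) := by
  have := IsIrreducible.nontrivial ρ
  have hsurj := surjective_lsum_basis hρ hσ hχ (Module.finBasis k (IntertwiningMap ρ σ))
  have hinj := (LinearMap.injective_iff_surjective_of_finrank_eq_finrank (by
    rw [finrank_pi_fintype, Finset.sum_const, Finset.card_univ, Fintype.card_fin, smul_eq_mul,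
      finrank_intertwiningMap_mul_finrank hρ hσ hχ])).mpr hsurj
  let E := LinearEquiv.ofBijective _ ⟨hinj, hsurj⟩
  refine ⟨E.symm, fun g w i => ?_⟩
  have hE : E (fun i => ρ g (E.symm w i)) = σ g w := by
    conv_rhs => rw [← E.apply_symm_apply w]
    exact IntertwiningMap.lsum_apply_map _ g _
  rw [← hE, LinearEquiv.symm_apply_apply]

end Representation.HasCentralCharacter

theorem heisenberg_restriction_isotypic_general
    {H₂ : Type*} [Group H₂] [Fintype H₂]
    (H₁ : Subgroup H₂)
    -- common center: the center of `H₂` is contained in `H₁` and coincides with the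
    -- center of `H₁`
    (hZ1 : Subgroup.center H₂ ≤ H₁)
    -- Heisenberg structure: commutators central, quotients elementary abelian
    (hcomm : ∀ x y : H₂, ⁅x, y⁆ ∈ Subgroup.center H₂)
    (φ : ↥(Subgroup.center H₂) →* ℂˣ)
    -- nondegeneracy of the commutator pairing on `H₂/Z` and on `H₁/Z`
    (hnd2 : ∀ x : H₂, (∀ y : H₂, φ ⟨⁅x, y⁆, hcomm x y⟩ = 1) → x ∈ Subgroup.center H₂)
    (hnd1 : ∀ x : H₂, x ∈ H₁ → (∀ y ∈ H₁, φ ⟨⁅x, y⁆, hcomm x y⟩ = 1) →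
      x ∈ Subgroup.center H₂)
    {V₁ V₂ : Type*} [AddCommGroup V₁] [Module ℂ V₁] [AddCommGroup V₂] [Module ℂ V₂]
    [FiniteDimensional ℂ V₁] [FiniteDimensional ℂ V₂]
    (η₁ : Representation ℂ ↥H₁ V₁) (η₂ : Representation ℂ H₂ V₂)
    (hη₁ : IrreducibleRep η₁) (hη₂ : IrreducibleRep η₂)
    (hη₁c : ∀ (z : ↥(Subgroup.center H₂)) (v : V₁),
      η₁ ⟨(z : H₂), hZ1 z.2⟩ v = (φ z : ℂ) • v)
    (hη₂c : ∀ (z : ↥(Subgroup.center H₂)) (v : V₂), η₂ (z : H₂) v = (φ z : ℂ) • v) :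
    ∃ m : ℕ, m ^ 2 = H₁.index ∧
      ∃ e : V₂ ≃ₗ[ℂ] (Fin m → V₁),
        ∀ (h : ↥H₁) (v : V₂) (i : Fin m), e (η₂ (h : H₂) v) i = η₁ h (e v i) := by
  have := Fintype.ofFinite H₁
  have := hη₁.isIrreducible
  have := hη₂.isIrreducible
  set χ₁ := φ.comp (Subgroup.subgroupOfEquivOfLe hZ1).toMonoidHom
  have hχ₂ := φ.isNondegenerateOnCommutators_of_pairing hcomm hnd2
  have hχ₁ : χ₁.IsNondegenerateOnCommutators :=
    φ.isNondegenerateOnCommutators_comp_subgroupOfEquivOfLe hZ1 hcomm hnd1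
  have hη₁χ : η₁.HasCentralCharacter _ χ₁ := fun z v => hη₁c (Subgroup.subgroupOfEquivOfLe hZ1 z) v
  have hη₂χ : η₂.HasCentralCharacter _ φ := hη₂c
  let σ : Representation ℂ H₁ V₂ := η₂.comp H₁.subtype
  have hσχ : σ.HasCentralCharacter _ χ₁ := fun z v => hη₂c (Subgroup.subgroupOfEquivOfLe hZ1 z) v
  obtain ⟨e, he⟩ := hη₁χ.exists_linearEquiv_pi hσχ hχ₁
  refine ⟨_, ?_, e, he⟩
  have hdim := hη₁χ.finrank_intertwiningMap_mul_finrank hσχ hχ₁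
  have hZ : Nat.card ((Subgroup.center H₂).subgroupOf H₁) = Nat.card (Subgroup.center H₂) :=
    Nat.card_congr (Subgroup.subgroupOfEquivOfLe hZ1).toEquiv
  refine Nat.eq_of_mul_eq_mul_left (Nat.card_pos (α := H₁)) ?_
  calc Nat.card H₁ * finrank ℂ (η₁.IntertwiningMap σ) ^ 2
      = Nat.card (Subgroup.center H₂) * finrank ℂ V₂ ^ 2 := by
        rw [hη₁χ.card_eq_card_mul_finrank_sq hχ₁, hZ, ← hdim]
        ring
    _ = Nat.card H₁ * H₁.index := by
        rw [Subgroup.card_mul_index, hη₂χ.card_eq_card_mul_finrank_sq hχ₂]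

/-- Let `H₁ ⊆ H₂` be finite Heisenberg `p`-groups with common center `Z` and let `φ` be
a nontrivial character of `Z`.  If `η₁, η₂` are irreducible representations of
`H₁, H₂` with central character `φ`, then `η₂|_{H₁}` is isomorphic to the direct sum of
`[H₂:H₁]^{1/2}` copies of `η₁`. -/
theorem heisenberg_restriction_isotypic {p : ℕ} [Fact p.Prime]
    {H₂ : Type*} [Group H₂] [Fintype H₂] (hp : IsPGroup p H₂)
    (H₁ : Subgroup H₂)
    -- common center: the center of `H₂` is contained in `H₁` and coincides with the
    -- center of `H₁`
    (hZ1 : Subgroup.center H₂ ≤ H₁)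
    (hcenter1 : ∀ x : ↥H₁, x ∈ Subgroup.center ↥H₁ ↔ (x : H₂) ∈ Subgroup.center H₂)
    -- Heisenberg structure: commutators central, quotients elementary abelian
    (hcomm : ∀ x y : H₂, ⁅x, y⁆ ∈ Subgroup.center H₂)
    (helem : ∀ x : H₂, x ^ p ∈ Subgroup.center H₂)
    (φ : ↥(Subgroup.center H₂) →* ℂˣ) (hφ : φ ≠ 1)
    -- nondegeneracy of the commutator pairing on `H₂/Z` and on `H₁/Z`
    (hnd2 : ∀ x : H₂, (∀ y : H₂, φ ⟨⁅x, y⁆, hcomm x y⟩ = 1) → x ∈ Subgroup.center H₂)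
    (hnd1 : ∀ x : H₂, x ∈ H₁ → (∀ y ∈ H₁, φ ⟨⁅x, y⁆, hcomm x y⟩ = 1) →
      x ∈ Subgroup.center H₂)
    {V₁ V₂ : Type*} [AddCommGroup V₁] [Module ℂ V₁] [AddCommGroup V₂] [Module ℂ V₂]
    [FiniteDimensional ℂ V₁] [FiniteDimensional ℂ V₂]
    (η₁ : Representation ℂ ↥H₁ V₁) (η₂ : Representation ℂ H₂ V₂)
    (hη₁ : IrreducibleRep η₁) (hη₂ : IrreducibleRep η₂)
    (hη₁c : ∀ (z : ↥(Subgroup.center H₂)) (v : V₁),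
      η₁ ⟨(z : H₂), hZ1 z.2⟩ v = (φ z : ℂ) • v)
    (hη₂c : ∀ (z : ↥(Subgroup.center H₂)) (v : V₂), η₂ (z : H₂) v = (φ z : ℂ) • v) :
    ∃ m : ℕ, m ^ 2 = H₁.index ∧
      ∃ e : V₂ ≃ₗ[ℂ] (Fin m → V₁),
        ∀ (h : ↥H₁) (v : V₂) (i : Fin m), e (η₂ (h : H₂) v) i = η₁ h (e v i) :=
  heisenberg_restriction_isotypic_general H₁ hZ1 hcomm φ hnd2 hnd1 η₁ η₂ hη₁ hη₂ hη₁c hη₂c
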